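/- The function W̃(F) = h(|Fv|, |Fw|, det F) is the rank-one convex envelope of W(F) = dist²(F, K): (i) W̃(F) ≤ W(F) for all F ∈ ℝ^{2×2}; (ii) W̃ is rank-one convex; and (iii) for every rank-one convex ψ : ℝ^{2×2} → ℝ with ψ ≤ W one has ψ ≤ W̃. Equivalently, W̃(F) = sup{ψ(F) : ψ rank-one convex, ψ ≤ W} for every F. Here v = (1,1)/√2 and w = (1,−1)/√2. -/
import Mathlib


open Matrix

noncomputable section

def frobSq (F : Matrix (Fin 2) (Fin 2) ℝ) : ℝ := ∑ i, ∑ j, (F i j) ^ 2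

def SO2 : Set (Matrix (Fin 2) (Fin 2) ℝ) := {Q | Qᵀ * Q = 1 ∧ Q.det = 1}

def U1 (l : ℝ) : Matrix (Fin 2) (Fin 2) ℝ := !![l, 0; 0, 1 / l]

def U2 (l : ℝ) : Matrix (Fin 2) (Fin 2) ℝ := !![1 / l, 0; 0, l]

def Kset (l : ℝ) : Set (Matrix (Fin 2) (Fin 2) ℝ) :=
  {G | ∃ Q ∈ SO2, G = Q * U1 l ∨ G = Q * U2 l}

/-- Squared Frobenius distance from `F` to the set `K`. -/
def distSqK (l : ℝ) (F : Matrix (Fin 2) (Fin 2) ℝ) : ℝ :=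
  sInf {r | ∃ G ∈ Kset l, r = frobSq (F - G)}

def vvec : Fin 2 → ℝ := ![1 / Real.sqrt 2, 1 / Real.sqrt 2]

def wvec : Fin 2 → ℝ := ![1 / Real.sqrt 2, -(1 / Real.sqrt 2)]

def xF (F : Matrix (Fin 2) (Fin 2) ℝ) : ℝ := Real.sqrt (∑ i, (F.mulVec vvec i) ^ 2)

def yF (F : Matrix (Fin 2) (Fin 2) ℝ) : ℝ := Real.sqrt (∑ i, (F.mulVec wvec i) ^ 2)

def Afun (l x y d : ℝ) : ℝ :=
  (x ^ 2 + y ^ 2) * (l ^ 2 + 1 / l ^ 2) / 2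
    + (l ^ 2 - 1 / l ^ 2) * Real.sqrt (x ^ 2 * y ^ 2 - d ^ 2) + 2 * d

def gfun (l x y d : ℝ) : ℝ :=
  x ^ 2 + y ^ 2 + (l ^ 2 + 1 / l ^ 2) - 2 * Real.sqrt (Afun l x y d)

/-- A function `ψ` on 2×2 matrices is rank-one convex if it is convex along every
rank-one line `t ↦ F + t a⊗b`. -/
def RankOneConvex (ψ : Matrix (Fin 2) (Fin 2) ℝ → ℝ) : Prop :=
  ∀ (F : Matrix (Fin 2) (Fin 2) ℝ) (a b : Fin 2 → ℝ),
    ConvexOn ℝ Set.univ fun t : ℝ => ψ (F + t • vecMulVec a b)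

def hfun (l x y d : ℝ) : ℝ :=
  sInf {r | ∃ ξ η : ℝ, x ≤ ξ ∧ y ≤ η ∧ r = gfun l ξ η d}

/-- The relaxed energy density `W̃(F) = h(|Fv|, |Fw|, det F)`. -/
def Wtilde (l : ℝ) (F : Matrix (Fin 2) (Fin 2) ℝ) : ℝ := hfun l (xF F) (yF F) F.det


set_option maxHeartbeats 1000000

namespace WAux


lemma sqrt_add_le {a b : ℝ} (ha : 0 ≤ a) (hb : 0 ≤ b) :
    Real.sqrt (a + b) ≤ Real.sqrt a + Real.sqrt b := by
  have h1 : a + b ≤ (Real.sqrt a + Real.sqrt b) ^ 2 := by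
    have := Real.sq_sqrt ha; have := Real.sq_sqrt hb
    nlinarith [mul_nonneg (Real.sqrt_nonneg a) (Real.sqrt_nonneg b)]
  calc Real.sqrt (a + b) ≤ Real.sqrt ((Real.sqrt a + Real.sqrt b) ^ 2) := Real.sqrt_le_sqrt h1
    _ = Real.sqrt a + Real.sqrt b := Real.sqrt_sq (by positivity)

lemma sqrt_concave {a b p q : ℝ} (ha : 0 ≤ a) (hb : 0 ≤ b) (hp : 0 ≤ p) (hq : 0 ≤ q)
    (hpq : p + q = 1) : p * Real.sqrt a + q * Real.sqrt b ≤ Real.sqrt (p * a + q * b) := by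
  have hsa := Real.sq_sqrt ha; have hsb := Real.sq_sqrt hb
  have hq' : q = 1 - p := by linarith
  subst hq'
  rw [Real.le_sqrt (add_nonneg (mul_nonneg hp (Real.sqrt_nonneg a))
    (mul_nonneg hq (Real.sqrt_nonneg b)))
    (add_nonneg (mul_nonneg hp ha) (mul_nonneg hq hb))]
  have key : p * a + (1 - p) * b - (p * Real.sqrt a + (1 - p) * Real.sqrt b) ^ 2
      = p * (1 - p) * (Real.sqrt a - Real.sqrt b) ^ 2 := by
    linear_combination (-p) * hsa + (p - 1) * hsb
  nlinarith [mul_nonneg (mul_nonneg hp hq) (sq_nonneg (Real.sqrt a - Real.sqrt b))]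

lemma abs_le_of_sq_le_sq {a b : ℝ} (h : a ^ 2 ≤ b ^ 2) (hb : 0 ≤ b) : |a| ≤ b := by
  calc |a| = Real.sqrt (a ^ 2) := (Real.sqrt_sq_eq_abs a).symm
    _ ≤ Real.sqrt (b ^ 2) := Real.sqrt_le_sqrt h
    _ = b := Real.sqrt_sq hb

def nrm (u : Fin 2 → ℝ) : ℝ := Real.sqrt (u 0 ^ 2 + u 1 ^ 2)

lemma nrm_nonneg (u : Fin 2 → ℝ) : 0 ≤ nrm u := Real.sqrt_nonneg _

lemma nrm_sq (u : Fin 2 → ℝ) : nrm u ^ 2 = u 0 ^ 2 + u 1 ^ 2 := Real.sq_sqrt (by positivity)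

lemma nrm_eq {u : Fin 2 → ℝ} {c : ℝ} (hc : 0 ≤ c) (h : u 0 ^ 2 + u 1 ^ 2 = c ^ 2) :
    nrm u = c := by rw [nrm, h, Real.sqrt_sq hc]

lemma inner_le_nrm (u v : Fin 2 → ℝ) : u 0 * v 0 + u 1 * v 1 ≤ nrm u * nrm v := by
  have h1 : (u 0 * v 0 + u 1 * v 1) ^ 2 ≤ (u 0 ^ 2 + u 1 ^ 2) * (v 0 ^ 2 + v 1 ^ 2) := by
    nlinarith [sq_nonneg (u 0 * v 1 - u 1 * v 0)]
  calc u 0 * v 0 + u 1 * v 1 ≤ |u 0 * v 0 + u 1 * v 1| := le_abs_self _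
    _ = Real.sqrt ((u 0 * v 0 + u 1 * v 1) ^ 2) := (Real.sqrt_sq_eq_abs _).symm
    _ ≤ Real.sqrt ((u 0 ^ 2 + u 1 ^ 2) * (v 0 ^ 2 + v 1 ^ 2)) := Real.sqrt_le_sqrt h1
    _ = nrm u * nrm v := by rw [Real.sqrt_mul (by positivity)]; rfl

lemma nrm_combo {p q : ℝ} (u v : Fin 2 → ℝ) (hp : 0 ≤ p) (hq : 0 ≤ q) :
    nrm (fun i => p * u i + q * v i) ≤ p * nrm u + q * nrm v := by
  have h1 : (p * u 0 + q * v 0) ^ 2 + (p * u 1 + q * v 1) ^ 2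
      ≤ (p * nrm u + q * nrm v) ^ 2 := by
    have hi := inner_le_nrm u v
    have hu := nrm_sq u; have hv := nrm_sq v
    have key : (p * nrm u + q * nrm v) ^ 2
        - ((p * u 0 + q * v 0) ^ 2 + (p * u 1 + q * v 1) ^ 2)
        = 2 * p * q * (nrm u * nrm v - (u 0 * v 0 + u 1 * v 1)) := by
      linear_combination p ^ 2 * hu + q ^ 2 * hv
    nlinarith [mul_nonneg (mul_nonneg hp hq) (sub_nonneg.mpr hi)]
  calc nrm (fun i => p * u i + q * v i)
      = Real.sqrt ((p * u 0 + q * v 0) ^ 2 + (p * u 1 + q * v 1) ^ 2) := rfl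
    _ ≤ Real.sqrt ((p * nrm u + q * nrm v) ^ 2) := Real.sqrt_le_sqrt h1
    _ = p * nrm u + q * nrm v := Real.sqrt_sq
        (add_nonneg (mul_nonneg hp (nrm_nonneg u)) (mul_nonneg hq (nrm_nonneg v)))

lemma mulVec_apply (F : Matrix (Fin 2) (Fin 2) ℝ) (c : Fin 2 → ℝ) (i : Fin 2) :
    F.mulVec c i = F i 0 * c 0 + F i 1 * c 1 := by
  simp [Matrix.mulVec, dotProduct, Fin.sum_univ_two]

lemma hr2 : (1 / Real.sqrt 2) ^ 2 = (1:ℝ) / 2 := by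
  rw [div_pow, one_pow, Real.sq_sqrt]; norm_num

lemma xF_nrm (F : Matrix (Fin 2) (Fin 2) ℝ) : xF F = nrm (F.mulVec vvec) := by
  rw [xF, nrm, Fin.sum_univ_two]

lemma yF_nrm (F : Matrix (Fin 2) (Fin 2) ℝ) : yF F = nrm (F.mulVec wvec) := by
  rw [yF, nrm, Fin.sum_univ_two]

lemma xF_sq (F : Matrix (Fin 2) (Fin 2) ℝ) :
    xF F ^ 2 = ((F 0 0 + F 0 1) ^ 2 + (F 1 0 + F 1 1) ^ 2) / 2 := by
  rw [xF_nrm, nrm_sq, mulVec_apply, mulVec_apply]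
  simp only [vvec, Matrix.cons_val_zero, Matrix.cons_val_one, Matrix.head_cons]
  linear_combination ((F 0 0 + F 0 1) ^ 2 + (F 1 0 + F 1 1) ^ 2) * hr2

lemma yF_sq (F : Matrix (Fin 2) (Fin 2) ℝ) :
    yF F ^ 2 = ((F 0 0 - F 0 1) ^ 2 + (F 1 0 - F 1 1) ^ 2) / 2 := by
  rw [yF_nrm, nrm_sq, mulVec_apply, mulVec_apply]
  simp only [wvec, Matrix.cons_val_zero, Matrix.cons_val_one, Matrix.head_cons]
  linear_combination ((F 0 0 - F 0 1) ^ 2 + (F 1 0 - F 1 1) ^ 2) * hr2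

def sF (F : Matrix (Fin 2) (Fin 2) ℝ) : ℝ :=
  (F 0 0 ^ 2 + F 1 0 ^ 2 - F 0 1 ^ 2 - F 1 1 ^ 2) / 2

lemma frobSq_expand (F : Matrix (Fin 2) (Fin 2) ℝ) :
    frobSq F = F 0 0 ^ 2 + F 0 1 ^ 2 + F 1 0 ^ 2 + F 1 1 ^ 2 := by
  simp [frobSq, Fin.sum_univ_two]; ring

lemma sum_sq (F : Matrix (Fin 2) (Fin 2) ℝ) : xF F ^ 2 + yF F ^ 2 = frobSq F := by
  rw [xF_sq, yF_sq, frobSq_expand]; ring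

lemma xy_det (F : Matrix (Fin 2) (Fin 2) ℝ) :
    xF F ^ 2 * yF F ^ 2 - F.det ^ 2 = sF F ^ 2 := by
  rw [xF_sq, yF_sq, Matrix.det_fin_two, sF]; ring

lemma xF_nonneg (F : Matrix (Fin 2) (Fin 2) ℝ) : 0 ≤ xF F := Real.sqrt_nonneg _
lemma yF_nonneg (F : Matrix (Fin 2) (Fin 2) ℝ) : 0 ≤ yF F := Real.sqrt_nonneg _

lemma det_abs_le (F : Matrix (Fin 2) (Fin 2) ℝ) : |F.det| ≤ xF F * yF F := by
  refine abs_le_of_sq_le_sq ?_ (mul_nonneg (xF_nonneg F) (yF_nonneg F))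
  nlinarith [xy_det F, sq_nonneg (sF F)]



variable {l : ℝ}

lemma hl0 (hl : 1 < l) : (0:ℝ) < l := lt_trans one_pos hl

lemma M_nonneg (hl : 1 < l) : (0:ℝ) ≤ l ^ 2 - 1 / l ^ 2 := by
  have h0 := hl0 hl
  have h1 : (1:ℝ) ≤ l ^ 2 := by nlinarith
  have h2 : 1 / l ^ 2 ≤ 1 := by
    rw [div_le_one (by positivity)]; exact h1
  linarith

lemma L_ge_two (hl : 1 < l) : (2:ℝ) ≤ l ^ 2 + 1 / l ^ 2 := by
  have h0 := hl0 hl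
  have key : l ^ 2 + 1 / l ^ 2 - 2 = (l ^ 2 - 1) ^ 2 / l ^ 2 := by
    field_simp; ring
  have h2 : 0 ≤ (l ^ 2 - 1) ^ 2 / l ^ 2 := by positivity
  linarith

lemma Afun_nonneg (hl : 1 < l) {x y d : ℝ} (hx : 0 ≤ x) (hy : 0 ≤ y)
    (hd : d ^ 2 ≤ x ^ 2 * y ^ 2) : 0 ≤ Afun l x y d := by
  have h1 : |d| ≤ x * y := by
    refine abs_le_of_sq_le_sq ?_ (mul_nonneg hx hy); nlinarith
  have h2 : -d ≤ |d| := neg_le_abs d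
  have h3 : 2 * (x * y) ≤ x ^ 2 + y ^ 2 := by nlinarith [sq_nonneg (x - y)]
  have h4 : x ^ 2 + y ^ 2 ≤ (x ^ 2 + y ^ 2) * (l ^ 2 + 1 / l ^ 2) / 2 := by
    nlinarith [L_ge_two hl, sq_nonneg x, sq_nonneg y]
  have h5 : 0 ≤ (l ^ 2 - 1 / l ^ 2) * Real.sqrt (x ^ 2 * y ^ 2 - d ^ 2) :=
    mul_nonneg (M_nonneg hl) (Real.sqrt_nonneg _)
  rw [Afun]; linarith

/-- Core algebraic inequality for concavity of `√(ab - d²)`. -/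
lemma key_ineq {a₁ b₁ d₁ a₂ b₂ d₂ e₁ e₂ : ℝ} (ha₁ : 0 ≤ a₁) (hb₁ : 0 ≤ b₁)
    (ha₂ : 0 ≤ a₂) (hb₂ : 0 ≤ b₂) (he₁ : 0 ≤ e₁) (he₂ : 0 ≤ e₂)
    (h1 : e₁ ^ 2 = a₁ * b₁ - d₁ ^ 2) (h2 : e₂ ^ 2 = a₂ * b₂ - d₂ ^ 2) :
    2 * (e₁ * e₂) ≤ a₁ * b₂ + a₂ * b₁ - 2 * (d₁ * d₂) := by
  set m := Real.sqrt (a₁ * b₁) with hm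
  set n := Real.sqrt (a₂ * b₂) with hn
  have hm0 : 0 ≤ m := Real.sqrt_nonneg _
  have hn0 : 0 ≤ n := Real.sqrt_nonneg _
  have hm2 : m ^ 2 = a₁ * b₁ := Real.sq_sqrt (mul_nonneg ha₁ hb₁)
  have hn2 : n ^ 2 = a₂ * b₂ := Real.sq_sqrt (mul_nonneg ha₂ hb₂)
  have hd₁ : |d₁| ≤ m := by
    refine abs_le_of_sq_le_sq ?_ hm0; nlinarith [sq_nonneg e₁]
  have hd₂ : |d₂| ≤ n := by
    refine abs_le_of_sq_le_sq ?_ hn0; nlinarith [sq_nonneg e₂]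
  have hdd : d₁ * d₂ ≤ m * n := by
    calc d₁ * d₂ ≤ |d₁ * d₂| := le_abs_self _
      _ = |d₁| * |d₂| := abs_mul _ _
      _ ≤ m * n := mul_le_mul hd₁ hd₂ (abs_nonneg _) hm0
  -- step 2 : e₁ e₂ ≤ m n - d₁ d₂
  have step2 : e₁ * e₂ ≤ m * n - d₁ * d₂ := by
    nlinarith [sq_nonneg (m * d₂ - n * d₁), mul_nonneg he₁ he₂, hdd]
  -- step 1 : 2 m n ≤ a₁ b₂ + a₂ b₁
  have step1 : 2 * (m * n) ≤ a₁ * b₂ + a₂ * b₁ := by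
    have hmn2 : (m * n) ^ 2 = (a₁ * b₁) * (a₂ * b₂) := by rw [mul_pow, hm2, hn2]
    have hS : 0 ≤ a₁ * b₂ + a₂ * b₁ :=
      add_nonneg (mul_nonneg ha₁ hb₂) (mul_nonneg ha₂ hb₁)
    have hsq : (2 * (m * n)) ^ 2 ≤ (a₁ * b₂ + a₂ * b₁) ^ 2 := by
      nlinarith [sq_nonneg (a₁ * b₂ - a₂ * b₁), hmn2]
    have := abs_le_of_sq_le_sq hsq hS
    calc 2 * (m * n) ≤ |2 * (m * n)| := le_abs_self _
      _ ≤ a₁ * b₂ + a₂ * b₁ := this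
  linarith

lemma detsqrt_concave {a₁ b₁ d₁ a₂ b₂ d₂ p q : ℝ} (ha₁ : 0 ≤ a₁) (hb₁ : 0 ≤ b₁)
    (ha₂ : 0 ≤ a₂) (hb₂ : 0 ≤ b₂) (hd₁ : d₁ ^ 2 ≤ a₁ * b₁) (hd₂ : d₂ ^ 2 ≤ a₂ * b₂)
    (hp : 0 ≤ p) (hq : 0 ≤ q) :
    p * Real.sqrt (a₁ * b₁ - d₁ ^ 2) + q * Real.sqrt (a₂ * b₂ - d₂ ^ 2)
      ≤ Real.sqrt ((p * a₁ + q * a₂) * (p * b₁ + q * b₂) - (p * d₁ + q * d₂) ^ 2) := by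
  set e₁ := Real.sqrt (a₁ * b₁ - d₁ ^ 2) with he₁def
  set e₂ := Real.sqrt (a₂ * b₂ - d₂ ^ 2) with he₂def
  have he₁ : 0 ≤ e₁ := Real.sqrt_nonneg _
  have he₂ : 0 ≤ e₂ := Real.sqrt_nonneg _
  have h1 : e₁ ^ 2 = a₁ * b₁ - d₁ ^ 2 := Real.sq_sqrt (by linarith)
  have h2 : e₂ ^ 2 = a₂ * b₂ - d₂ ^ 2 := Real.sq_sqrt (by linarith)
  have hkey := key_ineq ha₁ hb₁ ha₂ hb₂ he₁ he₂ h1 h2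
  have hsq : (p * e₁ + q * e₂) ^ 2
      ≤ (p * a₁ + q * a₂) * (p * b₁ + q * b₂) - (p * d₁ + q * d₂) ^ 2 := by
    have hid : (p * a₁ + q * a₂) * (p * b₁ + q * b₂) - (p * d₁ + q * d₂) ^ 2
        - (p * e₁ + q * e₂) ^ 2
        - p * q * ((a₁ * b₂ + a₂ * b₁ - 2 * (d₁ * d₂)) - 2 * (e₁ * e₂))
        = 0 := by linear_combination (-(p ^ 2)) * h1 - q ^ 2 * h2
    have hpr := mul_nonneg (mul_nonneg hp hq) (sub_nonneg.mpr hkey)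
    linarith
  calc p * e₁ + q * e₂ = Real.sqrt ((p * e₁ + q * e₂) ^ 2) :=
        (Real.sqrt_sq (add_nonneg (mul_nonneg hp he₁) (mul_nonneg hq he₂))).symm
    _ ≤ _ := Real.sqrt_le_sqrt hsq

lemma gfun_convex (hl : 1 < l) {x₁ y₁ d₁ x₂ y₂ d₂ p q : ℝ}
    (hx₁ : 0 ≤ x₁) (hy₁ : 0 ≤ y₁) (hd₁ : d₁ ^ 2 ≤ x₁ ^ 2 * y₁ ^ 2)
    (hx₂ : 0 ≤ x₂) (hy₂ : 0 ≤ y₂) (hd₂ : d₂ ^ 2 ≤ x₂ ^ 2 * y₂ ^ 2)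
    (hp : 0 ≤ p) (hq : 0 ≤ q) (hpq : p + q = 1) :
    gfun l (Real.sqrt (p * x₁ ^ 2 + q * x₂ ^ 2)) (Real.sqrt (p * y₁ ^ 2 + q * y₂ ^ 2))
        (p * d₁ + q * d₂)
      ≤ p * gfun l x₁ y₁ d₁ + q * gfun l x₂ y₂ d₂ := by
  have hX2 : Real.sqrt (p * x₁ ^ 2 + q * x₂ ^ 2) ^ 2 = p * x₁ ^ 2 + q * x₂ ^ 2 :=
    Real.sq_sqrt (add_nonneg (mul_nonneg hp (sq_nonneg _)) (mul_nonneg hq (sq_nonneg _)))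
  have hY2 : Real.sqrt (p * y₁ ^ 2 + q * y₂ ^ 2) ^ 2 = p * y₁ ^ 2 + q * y₂ ^ 2 :=
    Real.sq_sqrt (add_nonneg (mul_nonneg hp (sq_nonneg _)) (mul_nonneg hq (sq_nonneg _)))
  have hA₁ := Afun_nonneg hl hx₁ hy₁ hd₁
  have hA₂ := Afun_nonneg hl hx₂ hy₂ hd₂
  have hdet := detsqrt_concave (sq_nonneg x₁) (sq_nonneg y₁) (sq_nonneg x₂) (sq_nonneg y₂)
    hd₁ hd₂ hp hq
  have hmid : p * Afun l x₁ y₁ d₁ + q * Afun l x₂ y₂ d₂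
      ≤ Afun l (Real.sqrt (p * x₁ ^ 2 + q * x₂ ^ 2)) (Real.sqrt (p * y₁ ^ 2 + q * y₂ ^ 2))
          (p * d₁ + q * d₂) := by
    simp only [Afun]
    rw [hX2, hY2]
    have := mul_le_mul_of_nonneg_left hdet (M_nonneg hl)
    nlinarith [this]
  have hsc := sqrt_concave hA₁ hA₂ hp hq hpq
  have hmono := Real.sqrt_le_sqrt hmid
  simp only [gfun]
  rw [hX2, hY2]
  have hq' : q = 1 - p := by linarith
  subst hq'
  nlinarith [le_trans hsc hmono]



def hSet (l x y d : ℝ) : Set ℝ := {r | ∃ ξ η : ℝ, x ≤ ξ ∧ y ≤ η ∧ r = gfun l ξ η d}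

lemma hfun_eq (l x y d : ℝ) : hfun l x y d = sInf (hSet l x y d) := rfl

lemma hSet_nonempty (l x y d : ℝ) : (hSet l x y d).Nonempty :=
  ⟨gfun l x y d, x, y, le_refl _, le_refl _, rfl⟩

lemma gfun_lb (hl : 1 < l) (ξ η d : ℝ) :
    (l ^ 2 + 1 / l ^ 2) - l ^ 2 - 2 * Real.sqrt (2 * |d|) ≤ gfun l ξ η d := by
  have h0 := hl0 hl
  set t := ξ ^ 2 + η ^ 2 with ht
  have htn : 0 ≤ t := by positivity
  have habs : |ξ * η| ≤ t / 2 := by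
    refine abs_le_of_sq_le_sq ?_ (by positivity)
    nlinarith [sq_nonneg (ξ ^ 2 - η ^ 2), sq_nonneg (ξ*η)]
  have hs1 : Real.sqrt (ξ ^ 2 * η ^ 2 - d ^ 2) ≤ t / 2 := by
    calc Real.sqrt (ξ ^ 2 * η ^ 2 - d ^ 2) ≤ Real.sqrt ((ξ * η) ^ 2) :=
          Real.sqrt_le_sqrt (by nlinarith [sq_nonneg d])
      _ = |ξ * η| := Real.sqrt_sq_eq_abs _
      _ ≤ t / 2 := habs
  have h1 : Afun l ξ η d ≤ t * l ^ 2 + 2 * |d| := by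
    rw [Afun]
    have hM := M_nonneg hl
    have := mul_le_mul_of_nonneg_left hs1 hM
    have hd : 2 * d ≤ 2 * |d| := by have := le_abs_self d; linarith
    nlinarith [this, hd]
  have h2 : Real.sqrt (Afun l ξ η d) ≤ Real.sqrt t * l + Real.sqrt (2 * |d|) := by
    calc Real.sqrt (Afun l ξ η d) ≤ Real.sqrt (t * l ^ 2 + 2 * |d|) := Real.sqrt_le_sqrt h1
      _ ≤ Real.sqrt (t * l ^ 2) + Real.sqrt (2 * |d|) :=
          sqrt_add_le (by positivity) (by positivity)
      _ = Real.sqrt t * l + Real.sqrt (2 * |d|) := by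
          rw [Real.sqrt_mul htn, Real.sqrt_sq h0.le]
  have h3 : 2 * (Real.sqrt t * l) ≤ t + l ^ 2 := by
    nlinarith [sq_nonneg (Real.sqrt t - l), Real.sq_sqrt htn]
  rw [gfun]
  linarith

lemma hSet_bddBelow (hl : 1 < l) (x y d : ℝ) : BddBelow (hSet l x y d) := by
  refine ⟨(l ^ 2 + 1 / l ^ 2) - l ^ 2 - 2 * Real.sqrt (2 * |d|), ?_⟩
  rintro r ⟨ξ, η, _, _, rfl⟩
  exact gfun_lb hl ξ η d

lemma hfun_le (hl : 1 < l) {x y d ξ η : ℝ} (hx : x ≤ ξ) (hy : y ≤ η) :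
    hfun l x y d ≤ gfun l ξ η d :=
  csInf_le (hSet_bddBelow hl x y d) ⟨ξ, η, hx, hy, rfl⟩

lemma le_hfun {l x y d c : ℝ} (h : ∀ ξ η : ℝ, x ≤ ξ → y ≤ η → c ≤ gfun l ξ η d) :
    c ≤ hfun l x y d :=
  le_csInf (hSet_nonempty l x y d) (by rintro r ⟨ξ, η, h1, h2, rfl⟩; exact h ξ η h1 h2)

lemma hfun_combo (hl : 1 < l) {x y d x₁ y₁ d₁ x₂ y₂ d₂ p q : ℝ}
    (hx₁ : 0 ≤ x₁) (hy₁ : 0 ≤ y₁) (hd₁ : |d₁| ≤ x₁ * y₁)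
    (hx₂ : 0 ≤ x₂) (hy₂ : 0 ≤ y₂) (hd₂ : |d₂| ≤ x₂ * y₂)
    (hp : 0 ≤ p) (hq : 0 ≤ q) (hpq : p + q = 1)
    (hx : x ≤ p * x₁ + q * x₂) (hy : y ≤ p * y₁ + q * y₂) (hd : d = p * d₁ + q * d₂) :
    hfun l x y d ≤ p * hfun l x₁ y₁ d₁ + q * hfun l x₂ y₂ d₂ := by
  apply le_of_forall_pos_le_add
  intro ε hε
  obtain ⟨r₁, hr₁mem, hr₁⟩ := Real.lt_sInf_add_pos (hSet_nonempty l x₁ y₁ d₁) hε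
  obtain ⟨ξ₁, η₁, hξ₁, hη₁, rfl⟩ := hr₁mem
  obtain ⟨r₂, hr₂mem, hr₂⟩ := Real.lt_sInf_add_pos (hSet_nonempty l x₂ y₂ d₂) hε
  obtain ⟨ξ₂, η₂, hξ₂, hη₂, rfl⟩ := hr₂mem
  rw [← hfun_eq] at hr₁ hr₂
  have hξ₁0 : 0 ≤ ξ₁ := le_trans hx₁ hξ₁
  have hη₁0 : 0 ≤ η₁ := le_trans hy₁ hη₁
  have hξ₂0 : 0 ≤ ξ₂ := le_trans hx₂ hξ₂
  have hη₂0 : 0 ≤ η₂ := le_trans hy₂ hη₂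
  have hD₁ : d₁ ^ 2 ≤ ξ₁ ^ 2 * η₁ ^ 2 := by
    have h : |d₁| ≤ ξ₁ * η₁ := le_trans hd₁ (mul_le_mul hξ₁ hη₁ hy₁ hξ₁0)
    nlinarith [abs_nonneg d₁, sq_abs d₁]
  have hD₂ : d₂ ^ 2 ≤ ξ₂ ^ 2 * η₂ ^ 2 := by
    have h : |d₂| ≤ ξ₂ * η₂ := le_trans hd₂ (mul_le_mul hξ₂ hη₂ hy₂ hξ₂0)
    nlinarith [abs_nonneg d₂, sq_abs d₂]
  have hq' : q = 1 - p := by linarith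
  subst hq'
  have hXx : x ≤ Real.sqrt (p * ξ₁ ^ 2 + (1 - p) * ξ₂ ^ 2) := by
    have h1 : p * x₁ + (1 - p) * x₂ ≤ p * ξ₁ + (1 - p) * ξ₂ := by
      have := mul_le_mul_of_nonneg_left hξ₁ hp
      have := mul_le_mul_of_nonneg_left hξ₂ hq
      linarith
    have h2 : p * ξ₁ + (1 - p) * ξ₂ ≤ Real.sqrt (p * ξ₁ ^ 2 + (1 - p) * ξ₂ ^ 2) := by
      rw [Real.le_sqrt (by positivity)
        (add_nonneg (mul_nonneg hp (sq_nonneg _)) (mul_nonneg hq (sq_nonneg _)))]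
      nlinarith [mul_nonneg (mul_nonneg hp hq) (sq_nonneg (ξ₁ - ξ₂))]
    linarith
  have hYy : y ≤ Real.sqrt (p * η₁ ^ 2 + (1 - p) * η₂ ^ 2) := by
    have h1 : p * y₁ + (1 - p) * y₂ ≤ p * η₁ + (1 - p) * η₂ := by
      have := mul_le_mul_of_nonneg_left hη₁ hp
      have := mul_le_mul_of_nonneg_left hη₂ hq
      linarith
    have h2 : p * η₁ + (1 - p) * η₂ ≤ Real.sqrt (p * η₁ ^ 2 + (1 - p) * η₂ ^ 2) := by
      rw [Real.le_sqrt (by positivity)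
        (add_nonneg (mul_nonneg hp (sq_nonneg _)) (mul_nonneg hq (sq_nonneg _)))]
      nlinarith [mul_nonneg (mul_nonneg hp hq) (sq_nonneg (η₁ - η₂))]
    linarith
  have step1 : hfun l x y d ≤ gfun l (Real.sqrt (p * ξ₁ ^ 2 + (1 - p) * ξ₂ ^ 2))
      (Real.sqrt (p * η₁ ^ 2 + (1 - p) * η₂ ^ 2)) (p * d₁ + (1 - p) * d₂) := by
    rw [hd]; exact hfun_le hl hXx hYy
  have step2 := gfun_convex hl hξ₁0 hη₁0 hD₁ hξ₂0 hη₂0 hD₂ hp hq (by ring)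
  have m₁ := mul_le_mul_of_nonneg_left hr₁.le hp
  have m₂ := mul_le_mul_of_nonneg_left hr₂.le hq
  linarith



lemma so2_entries (Q : Matrix (Fin 2) (Fin 2) ℝ) (hQ : Q ∈ SO2) :
    Q 1 1 = Q 0 0 ∧ Q 0 1 = -Q 1 0 ∧ Q 0 0 ^ 2 + Q 1 0 ^ 2 = 1 := by
  obtain ⟨horth, hdet⟩ := hQ
  have h00 := congrFun (congrFun horth 0) 0
  have h01 := congrFun (congrFun horth 0) 1
  have h11 := congrFun (congrFun horth 1) 1
  simp [Matrix.mul_apply, Matrix.transpose_apply, Fin.sum_univ_two, Matrix.one_apply] at h00 h01 h11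
  rw [Matrix.det_fin_two] at hdet
  have e1 : (Q 0 0 - Q 1 1) ^ 2 + (Q 0 1 + Q 1 0) ^ 2 = 0 := by
    nlinarith [h00, h11, hdet]
  have e2 : Q 1 1 = Q 0 0 := by nlinarith [sq_nonneg (Q 0 0 - Q 1 1), sq_nonneg (Q 0 1 + Q 1 0)]
  have e3 : Q 0 1 = -Q 1 0 := by nlinarith [sq_nonneg (Q 0 0 - Q 1 1), sq_nonneg (Q 0 1 + Q 1 0)]
  refine ⟨e2, e3, ?_⟩
  nlinarith [h00]

lemma frob_sub_well1 (l : ℝ) (F Q : Matrix (Fin 2) (Fin 2) ℝ) (hQ : Q ∈ SO2) :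
    frobSq (F - Q * U1 l) = frobSq F + (l ^ 2 + 1 / l ^ 2)
      - 2 * (Q 0 0 * (l * F 0 0 + F 1 1 / l) + Q 1 0 * (l * F 1 0 - F 0 1 / l)) := by
  obtain ⟨e2, e3, hcs⟩ := so2_entries Q hQ
  rw [frobSq_expand, frobSq_expand]
  simp only [Matrix.sub_apply, Matrix.mul_apply, Fin.sum_univ_two, U1, Matrix.of_apply,
    Matrix.cons_val', Matrix.cons_val_zero, Matrix.cons_val_one, Matrix.head_cons,
    Matrix.head_fin_const, Matrix.empty_val', Matrix.cons_val_fin_one]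
  rw [e2, e3]
  linear_combination (l ^ 2 + 1 / l ^ 2) * hcs

lemma frob_sub_well2 (l : ℝ) (F Q : Matrix (Fin 2) (Fin 2) ℝ) (hQ : Q ∈ SO2) :
    frobSq (F - Q * U2 l) = frobSq F + (l ^ 2 + 1 / l ^ 2)
      - 2 * (Q 0 0 * (F 0 0 / l + l * F 1 1) + Q 1 0 * (F 1 0 / l - l * F 0 1)) := by
  obtain ⟨e2, e3, hcs⟩ := so2_entries Q hQ
  rw [frobSq_expand, frobSq_expand]
  simp only [Matrix.sub_apply, Matrix.mul_apply, Fin.sum_univ_two, U2, Matrix.of_apply,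
    Matrix.cons_val', Matrix.cons_val_zero, Matrix.cons_val_one, Matrix.head_cons,
    Matrix.head_fin_const, Matrix.empty_val', Matrix.cons_val_fin_one]
  rw [e2, e3]
  linear_combination (l ^ 2 + 1 / l ^ 2) * hcs

lemma Afun_eval (l : ℝ) (F : Matrix (Fin 2) (Fin 2) ℝ) :
    Afun l (xF F) (yF F) F.det
      = frobSq F * (l ^ 2 + 1 / l ^ 2) / 2 + (l ^ 2 - 1 / l ^ 2) * |sF F| + 2 * F.det := by
  rw [Afun, xy_det, Real.sqrt_sq_eq_abs, sum_sq]

lemma alpha_sq1 (l : ℝ) (hl0 : l ≠ 0) (F : Matrix (Fin 2) (Fin 2) ℝ) :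
    (l * F 0 0 + F 1 1 / l) ^ 2 + (l * F 1 0 - F 0 1 / l) ^ 2
      = frobSq F * (l ^ 2 + 1 / l ^ 2) / 2 + (l ^ 2 - 1 / l ^ 2) * sF F + 2 * F.det := by
  rw [frobSq_expand, sF, Matrix.det_fin_two]
  field_simp
  ring

lemma alpha_sq2 (l : ℝ) (hl0 : l ≠ 0) (F : Matrix (Fin 2) (Fin 2) ℝ) :
    (F 0 0 / l + l * F 1 1) ^ 2 + (F 1 0 / l - l * F 0 1) ^ 2
      = frobSq F * (l ^ 2 + 1 / l ^ 2) / 2 - (l ^ 2 - 1 / l ^ 2) * sF F + 2 * F.det := by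
  rw [frobSq_expand, sF, Matrix.det_fin_two]
  field_simp
  ring



lemma le_sqrt_of_sq_le {a b : ℝ} (h : a ^ 2 ≤ b) : a ≤ Real.sqrt b := by
  calc a ≤ |a| := le_abs_self a
    _ = Real.sqrt (a ^ 2) := (Real.sqrt_sq_eq_abs a).symm
    _ ≤ Real.sqrt b := Real.sqrt_le_sqrt h

lemma frobSq_nonneg (F : Matrix (Fin 2) (Fin 2) ℝ) : 0 ≤ frobSq F := by
  rw [frobSq_expand]; positivity

lemma dist_elem_ge {l : ℝ} (hl : 1 < l) (F G : Matrix (Fin 2) (Fin 2) ℝ)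
    (hG : G ∈ Kset l) : gfun l (xF F) (yF F) F.det ≤ frobSq (F - G) := by
  obtain ⟨Q, hQ, hcase | hcase⟩ := hG <;> subst hcase
  · rw [frob_sub_well1 l F Q hQ]
    obtain ⟨e2, e3, hcs⟩ := so2_entries Q hQ
    obtain ⟨α, hα⟩ : ∃ a : ℝ, l * F 0 0 + F 1 1 / l = a := ⟨_, rfl⟩
    obtain ⟨β, hβ⟩ : ∃ b : ℝ, l * F 1 0 - F 0 1 / l = b := ⟨_, rfl⟩
    rw [hα, hβ]
    have c1 : (Q 0 0 * α + Q 1 0 * β) ^ 2 ≤ α ^ 2 + β ^ 2 := by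
      nlinarith [sq_nonneg (Q 0 0 * β - Q 1 0 * α), hcs, sq_nonneg α, sq_nonneg β]
    have c2 : α ^ 2 + β ^ 2 ≤ Afun l (xF F) (yF F) F.det := by
      rw [Afun_eval, ← hα, ← hβ, alpha_sq1 l (ne_of_gt (hl0 hl)) F]
      have := mul_le_mul_of_nonneg_left (le_abs_self (sF F)) (M_nonneg hl)
      linarith
    have hab := le_sqrt_of_sq_le (le_trans c1 c2)
    rw [gfun]
    have hx2 := sum_sq F
    linarith
  · rw [frob_sub_well2 l F Q hQ]
    obtain ⟨e2, e3, hcs⟩ := so2_entries Q hQ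
    obtain ⟨α, hα⟩ : ∃ a : ℝ, F 0 0 / l + l * F 1 1 = a := ⟨_, rfl⟩
    obtain ⟨β, hβ⟩ : ∃ b : ℝ, F 1 0 / l - l * F 0 1 = b := ⟨_, rfl⟩
    rw [hα, hβ]
    have c1 : (Q 0 0 * α + Q 1 0 * β) ^ 2 ≤ α ^ 2 + β ^ 2 := by
      nlinarith [sq_nonneg (Q 0 0 * β - Q 1 0 * α), hcs, sq_nonneg α, sq_nonneg β]
    have c2 : α ^ 2 + β ^ 2 ≤ Afun l (xF F) (yF F) F.det := by
      rw [Afun_eval, ← hα, ← hβ, alpha_sq2 l (ne_of_gt (hl0 hl)) F]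
      have := mul_le_mul_of_nonneg_left (neg_abs_le (sF F)) (M_nonneg hl)
      nlinarith [mul_le_mul_of_nonneg_left (neg_abs_le (sF F)) (M_nonneg hl)]
    have hab := le_sqrt_of_sq_le (le_trans c1 c2)
    rw [gfun]
    have hx2 := sum_sq F
    linarith

lemma one_mem_SO2 : (1 : Matrix (Fin 2) (Fin 2) ℝ) ∈ SO2 :=
  ⟨by rw [Matrix.transpose_one, one_mul], Matrix.det_one⟩

lemma rot_mem_SO2 {α β ρ : ℝ} (hρ : 0 < ρ) (h : ρ ^ 2 = α ^ 2 + β ^ 2) :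
    !![α / ρ, -(β / ρ); β / ρ, α / ρ] ∈ SO2 := by
  have hρ' : ρ ≠ 0 := ne_of_gt hρ
  have hT : (!![α / ρ, -(β / ρ); β / ρ, α / ρ])ᵀ = !![α / ρ, β / ρ; -(β / ρ), α / ρ] := by
    ext i j; fin_cases i <;> fin_cases j <;> simp [Matrix.transpose_apply]
  constructor
  · rw [hT, Matrix.mul_fin_two, Matrix.one_fin_two]
    ext i j
    fin_cases i <;> fin_cases j <;> simp <;> field_simp <;>
      first
        | ring1
        | linear_combination -h
        | linear_combination h
  · rw [Matrix.det_fin_two]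
    simp only [Matrix.of_apply, Matrix.cons_val', Matrix.cons_val_zero, Matrix.cons_val_one,
      Matrix.head_cons, Matrix.empty_val', Matrix.cons_val_fin_one, Matrix.head_fin_const]
    field_simp
    first
      | linear_combination -h
      | linear_combination h

lemma dist_exists {l : ℝ} (hl : 1 < l) (F : Matrix (Fin 2) (Fin 2) ℝ) :
    ∃ G ∈ Kset l, frobSq (F - G) = gfun l (xF F) (yF F) F.det := by
  have hl0' : l ≠ 0 := ne_of_gt (hl0 hl)
  have h100 : (1 : Matrix (Fin 2) (Fin 2) ℝ) 0 0 = 1 := Matrix.one_apply_eq 0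
  have h110 : (1 : Matrix (Fin 2) (Fin 2) ℝ) 1 0 = 0 := Matrix.one_apply_ne (by decide)
  by_cases hs : 0 ≤ sF F
  · obtain ⟨α, hα⟩ : ∃ a : ℝ, l * F 0 0 + F 1 1 / l = a := ⟨_, rfl⟩
    obtain ⟨β, hβ⟩ : ∃ b : ℝ, l * F 1 0 - F 0 1 / l = b := ⟨_, rfl⟩
    have hAeq : Afun l (xF F) (yF F) F.det = α ^ 2 + β ^ 2 := by
      rw [Afun_eval, abs_of_nonneg hs, ← alpha_sq1 l hl0' F, hα, hβ]
    by_cases hA : α ^ 2 + β ^ 2 = 0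
    · refine ⟨1 * U1 l, ⟨1, one_mem_SO2, Or.inl rfl⟩, ?_⟩
      have hα0 : α = 0 := by nlinarith [sq_nonneg α, sq_nonneg β]
      rw [frob_sub_well1 l F 1 one_mem_SO2, hα, hβ, gfun, hAeq, hA, Real.sqrt_zero, sum_sq,
        h100, h110]
      linear_combination (-2 : ℝ) * hα0
    · have hρpos : 0 < Real.sqrt (α ^ 2 + β ^ 2) :=
        Real.sqrt_pos.mpr (lt_of_le_of_ne (by positivity) (Ne.symm hA))
      obtain ⟨ρ, hρdef⟩ : ∃ r : ℝ, Real.sqrt (α ^ 2 + β ^ 2) = r := ⟨_, rfl⟩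
      rw [hρdef] at hρpos
      have hρ2 : ρ ^ 2 = α ^ 2 + β ^ 2 := by
        rw [← hρdef]; exact Real.sq_sqrt (by positivity)
      have hQSO := rot_mem_SO2 hρpos hρ2
      refine ⟨_ * U1 l, ⟨_, hQSO, Or.inl rfl⟩, ?_⟩
      rw [frob_sub_well1 l F _ hQSO, hα, hβ, gfun, hAeq, ← hρ2, Real.sqrt_sq hρpos.le, sum_sq]
      have hQ00 : (!![α / ρ, -(β / ρ); β / ρ, α / ρ]) 0 0 = α / ρ := by simp
      have hQ10 : (!![α / ρ, -(β / ρ); β / ρ, α / ρ]) 1 0 = β / ρ := by simp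
      rw [hQ00, hQ10]
      have hval : α / ρ * α + β / ρ * β = ρ := by
        field_simp
        first
          | linear_combination -hρ2
          | linear_combination hρ2
      rw [hval]
  · obtain ⟨α, hα⟩ : ∃ a : ℝ, F 0 0 / l + l * F 1 1 = a := ⟨_, rfl⟩
    obtain ⟨β, hβ⟩ : ∃ b : ℝ, F 1 0 / l - l * F 0 1 = b := ⟨_, rfl⟩
    have hAeq : Afun l (xF F) (yF F) F.det = α ^ 2 + β ^ 2 := by
      rw [Afun_eval, abs_of_neg (not_le.mp hs)]
      have h := alpha_sq2 l hl0' F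
      rw [hα, hβ] at h
      linear_combination -h
    by_cases hA : α ^ 2 + β ^ 2 = 0
    · refine ⟨1 * U2 l, ⟨1, one_mem_SO2, Or.inr rfl⟩, ?_⟩
      have hα0 : α = 0 := by nlinarith [sq_nonneg α, sq_nonneg β]
      rw [frob_sub_well2 l F 1 one_mem_SO2, hα, hβ, gfun, hAeq, hA, Real.sqrt_zero, sum_sq,
        h100, h110]
      linear_combination (-2 : ℝ) * hα0
    · have hρpos : 0 < Real.sqrt (α ^ 2 + β ^ 2) :=
        Real.sqrt_pos.mpr (lt_of_le_of_ne (by positivity) (Ne.symm hA))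
      obtain ⟨ρ, hρdef⟩ : ∃ r : ℝ, Real.sqrt (α ^ 2 + β ^ 2) = r := ⟨_, rfl⟩
      rw [hρdef] at hρpos
      have hρ2 : ρ ^ 2 = α ^ 2 + β ^ 2 := by
        rw [← hρdef]; exact Real.sq_sqrt (by positivity)
      have hQSO := rot_mem_SO2 hρpos hρ2
      refine ⟨_ * U2 l, ⟨_, hQSO, Or.inr rfl⟩, ?_⟩
      rw [frob_sub_well2 l F _ hQSO, hα, hβ, gfun, hAeq, ← hρ2, Real.sqrt_sq hρpos.le, sum_sq]
      have hQ00 : (!![α / ρ, -(β / ρ); β / ρ, α / ρ]) 0 0 = α / ρ := by simp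
      have hQ10 : (!![α / ρ, -(β / ρ); β / ρ, α / ρ]) 1 0 = β / ρ := by simp
      rw [hQ00, hQ10]
      have hval : α / ρ * α + β / ρ * β = ρ := by
        field_simp
        first
          | linear_combination -hρ2
          | linear_combination hρ2
      rw [hval]

theorem distSq_eq {l : ℝ} (hl : 1 < l) (F : Matrix (Fin 2) (Fin 2) ℝ) :
    distSqK l F = gfun l (xF F) (yF F) F.det := by
  obtain ⟨G₀, hG₀, hv₀⟩ := dist_exists hl F
  have hbdd : BddBelow {r | ∃ G ∈ Kset l, r = frobSq (F - G)} :=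
    ⟨0, by rintro r ⟨G, hG, rfl⟩; exact frobSq_nonneg _⟩
  apply le_antisymm
  · have := csInf_le hbdd (show frobSq (F - G₀) ∈ _ from ⟨G₀, hG₀, rfl⟩)
    rw [hv₀] at this
    exact this
  · refine le_csInf ⟨frobSq (F - G₀), G₀, hG₀, rfl⟩ ?_
    rintro r ⟨G, hG, rfl⟩
    exact dist_elem_ge hl F G hG



lemma vvec_unit : vvec 0 ^ 2 + vvec 1 ^ 2 = 1 := by
  show (1 / Real.sqrt 2) ^ 2 + (1 / Real.sqrt 2) ^ 2 = 1
  linear_combination 2 * hr2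

lemma wvec_unit : wvec 0 ^ 2 + wvec 1 ^ 2 = 1 := by
  show (1 / Real.sqrt 2) ^ 2 + (-(1 / Real.sqrt 2)) ^ 2 = 1
  linear_combination 2 * hr2

lemma vw_orth : vvec 0 * wvec 0 + vvec 1 * wvec 1 = 0 := by
  show 1 / Real.sqrt 2 * (1 / Real.sqrt 2) + 1 / Real.sqrt 2 * -(1 / Real.sqrt 2) = 0
  ring

lemma wv_orth : wvec 0 * vvec 0 + wvec 1 * vvec 1 = 0 := by
  show 1 / Real.sqrt 2 * (1 / Real.sqrt 2) + -(1 / Real.sqrt 2) * (1 / Real.sqrt 2) = 0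
  ring

lemma nrm_pos {u : Fin 2 → ℝ} (h : u ≠ 0) : 0 < nrm u := by
  rcases lt_or_eq_of_le (nrm_nonneg u) with h1 | h1
  · exact h1
  · exfalso
    apply h
    have h2 : u 0 ^ 2 + u 1 ^ 2 = 0 := by rw [← nrm_sq, ← h1]; ring
    have h3 : u 0 = 0 := by nlinarith [sq_nonneg (u 0), sq_nonneg (u 1)]
    have h4 : u 1 = 0 := by nlinarith [sq_nonneg (u 0), sq_nonneg (u 1)]
    funext i
    fin_cases i <;> simp [h3, h4]

lemma line_mulVec (F : Matrix (Fin 2) (Fin 2) ℝ) (a ν c : Fin 2 → ℝ) (t : ℝ) (i : Fin 2) :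
    (F + t • vecMulVec a ν).mulVec c i
      = F.mulVec c i + t * a i * (ν 0 * c 0 + ν 1 * c 1) := by
  rw [mulVec_apply, mulVec_apply]
  simp only [Matrix.add_apply, Matrix.smul_apply, Matrix.vecMulVec_apply, smul_eq_mul]
  ring

/-- One lamination step: raise `|Fν|` to any `η ≥ |Fν|` keeping `|Fμ|` and `det`. -/
lemma raise {ψ : Matrix (Fin 2) (Fin 2) ℝ → ℝ} (hψ : RankOneConvex ψ)
    (F : Matrix (Fin 2) (Fin 2) ℝ) (μ ν : Fin 2 → ℝ)
    (hμ1 : μ 0 ^ 2 + μ 1 ^ 2 = 1) (hν1 : ν 0 ^ 2 + ν 1 ^ 2 = 1)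
    (horth : μ 0 * ν 0 + μ 1 * ν 1 = 0)
    {η : ℝ} (hη : nrm (F.mulVec ν) ≤ η) :
    ∃ (F₁ F₂ : Matrix (Fin 2) (Fin 2) ℝ) (θ : ℝ), 0 ≤ θ ∧ θ ≤ 1 ∧
      ψ F ≤ θ * ψ F₁ + (1 - θ) * ψ F₂ ∧
      (nrm (F₁.mulVec μ) = nrm (F.mulVec μ) ∧ nrm (F₁.mulVec ν) = η ∧ F₁.det = F.det) ∧
      (nrm (F₂.mulVec μ) = nrm (F.mulVec μ) ∧ nrm (F₂.mulVec ν) = η ∧ F₂.det = F.det) := by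
  have hη0 : 0 ≤ η := le_trans (nrm_nonneg _) hη
  -- choose the direction vector a
  obtain ⟨a, ha1, hda⟩ : ∃ a : Fin 2 → ℝ, (a 0 ^ 2 + a 1 ^ 2 = 1) ∧
      (F.mulVec μ 0 * a 1 = F.mulVec μ 1 * a 0) := by
    by_cases hFμ : F.mulVec μ = 0
    · exact ⟨ν, hν1, by rw [hFμ]; simp⟩
    · have hX := nrm_pos hFμ
      refine ⟨fun i => F.mulVec μ i / nrm (F.mulVec μ), ?_, by ring⟩
      have h2 := nrm_sq (F.mulVec μ)
      field_simp
      linear_combination -h2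
  set u := F.mulVec ν with hu
  have hy2 : nrm u ^ 2 = u 0 ^ 2 + u 1 ^ 2 := nrm_sq u
  obtain ⟨sa, hsa⟩ : ∃ s : ℝ, a 0 * u 0 + a 1 * u 1 = s := ⟨_, rfl⟩
  have hrad : 0 ≤ sa ^ 2 + η ^ 2 - nrm u ^ 2 := by
    have : nrm u ^ 2 ≤ η ^ 2 := by nlinarith [nrm_nonneg u]
    nlinarith [sq_nonneg sa]
  obtain ⟨R, hRdef⟩ : ∃ r : ℝ, Real.sqrt (sa ^ 2 + η ^ 2 - nrm u ^ 2) = r := ⟨_, rfl⟩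
  have hR0 : 0 ≤ R := by rw [← hRdef]; exact Real.sqrt_nonneg _
  have hR2 : R ^ 2 = sa ^ 2 + η ^ 2 - nrm u ^ 2 := by rw [← hRdef]; exact Real.sq_sqrt hrad
  have hsaR : |sa| ≤ R := by
    refine abs_le_of_sq_le_sq ?_ hR0
    nlinarith [nrm_nonneg u, hη0]
  have hsaR1 : -R ≤ sa := by have := neg_abs_le sa; linarith
  have hsaR2 : sa ≤ R := le_trans (le_abs_self sa) hsaR
  -- the two endpoints and weight
  set θ := (sa + R) / (2 * R) with hθdef
  have hθ0 : 0 ≤ θ := div_nonneg (by linarith) (by linarith)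
  have hθ1 : θ ≤ 1 := by
    rcases eq_or_lt_of_le hR0 with h | h
    · rw [hθdef, ← h]; norm_num
    · rw [hθdef, div_le_one (by linarith)]; linarith
  have hθc : θ * (-sa + R) + (1 - θ) * (-sa - R) = 0 := by
    rcases eq_or_lt_of_le hR0 with h | h
    · have hsa0 : sa = 0 := by
        have : |sa| ≤ 0 := by rw [h]; exact hsaR
        have := abs_nonneg sa
        have : |sa| = 0 := le_antisymm ‹|sa| ≤ 0› this
        exact abs_eq_zero.mp this
      rw [hθdef, ← h, hsa0]; norm_num
    · rw [hθdef]; field_simp; ring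
  -- generic claim about the coordinates of F + t • a⊗ν when (t + sa)² = R²
  have claim : ∀ t : ℝ, (t + sa) ^ 2 = R ^ 2 →
      (nrm ((F + t • vecMulVec a ν).mulVec μ) = nrm (F.mulVec μ) ∧
       nrm ((F + t • vecMulVec a ν).mulVec ν) = η ∧
       (F + t • vecMulVec a ν).det = F.det) := by
    intro t ht
    have hq : t ^ 2 + 2 * t * sa = η ^ 2 - nrm u ^ 2 := by linear_combination ht + hR2
    refine ⟨?_, ?_, ?_⟩
    · have heq : (F + t • vecMulVec a ν).mulVec μ = F.mulVec μ := by
        funext i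
        rw [line_mulVec]
        linear_combination t * a i * (by linear_combination horth :
          ν 0 * μ 0 + ν 1 * μ 1 = 0)
      rw [heq]
    · refine nrm_eq hη0 ?_
      rw [line_mulVec, line_mulVec]
      rw [show ν 0 * ν 0 + ν 1 * ν 1 = 1 by linear_combination hν1]
      have e0 : F.mulVec ν 0 = u 0 := rfl
      have e1 : F.mulVec ν 1 = u 1 := rfl
      rw [e0, e1]
      linear_combination hq + t ^ 2 * ha1 - hy2 + (2 * t) * hsa
    · -- determinant is preserved
      have hE : (μ 0 * ν 1 - μ 1 * ν 0) ^ 2 = 1 := by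
        linear_combination (ν 0 ^ 2 + ν 1 ^ 2) * hμ1 + hν1
          - (μ 0 * ν 0 + μ 1 * ν 1) * horth
      have hμa : μ 0 = (μ 0 * ν 1 - μ 1 * ν 0) * ν 1 := by
        linear_combination (-(μ 0)) * hν1 + ν 0 * horth
      have hμb : μ 1 = -((μ 0 * ν 1 - μ 1 * ν 0) * ν 0) := by
        linear_combination (-(μ 1)) * hν1 + ν 1 * horth
      have hda' : (F 0 0 * μ 0 + F 0 1 * μ 1) * a 1 = (F 1 0 * μ 0 + F 1 1 * μ 1) * a 0 := by
        rw [mulVec_apply, mulVec_apply] at hda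
        exact hda
      have hda2 : (F 0 0 * ν 1 - F 0 1 * ν 0) * a 1 = (F 1 0 * ν 1 - F 1 1 * ν 0) * a 0 := by
        linear_combination (μ 0 * ν 1 - μ 1 * ν 0) * hda'
          - ((F 0 0 * ν 1 - F 0 1 * ν 0) * a 1 - (F 1 0 * ν 1 - F 1 1 * ν 0) * a 0) * hE
          - (μ 0 * ν 1 - μ 1 * ν 0) * (F 0 0 * a 1 - F 1 0 * a 0) * hμa
          - (μ 0 * ν 1 - μ 1 * ν 0) * (F 0 1 * a 1 - F 1 1 * a 0) * hμb
      have hc : F 0 0 * (a 1 * ν 1) + F 1 1 * (a 0 * ν 0)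
          - F 0 1 * (a 1 * ν 0) - F 1 0 * (a 0 * ν 1) = 0 := by
        linear_combination hda2
      rw [Matrix.det_fin_two, Matrix.det_fin_two]
      simp only [Matrix.add_apply, Matrix.smul_apply, Matrix.vecMulVec_apply, smul_eq_mul]
      linear_combination t * hc
  have hp1 : (-sa + R + sa) ^ 2 = R ^ 2 := by ring
  have hp2 : (-sa - R + sa) ^ 2 = R ^ 2 := by ring
  obtain ⟨c1a, c1b, c1c⟩ := claim (-sa + R) hp1
  obtain ⟨c2a, c2b, c2c⟩ := claim (-sa - R) hp2
  refine ⟨F + (-sa + R) • vecMulVec a ν, F + (-sa - R) • vecMulVec a ν, θ, hθ0, hθ1, ?_,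
    ⟨c1a, c1b, c1c⟩, ⟨c2a, c2b, c2c⟩⟩
  have hcv := (hψ F a ν).2 (Set.mem_univ (-sa + R)) (Set.mem_univ (-sa - R)) hθ0
    (show (0:ℝ) ≤ 1 - θ by linarith) (show θ + (1 - θ) = 1 by ring)
  simp only [smul_eq_mul] at hcv
  rw [hθc] at hcv
  have hF0 : F + (0:ℝ) • vecMulVec a ν = F := by rw [zero_smul, add_zero]
  rw [hF0] at hcv
  exact hcv

lemma comb_le {θ r₁ r₂ g : ℝ} (h0 : 0 ≤ θ) (h1 : θ ≤ 1) (ha : r₁ ≤ g) (hb : r₂ ≤ g) :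
    θ * r₁ + (1 - θ) * r₂ ≤ g := by nlinarith



theorem wtilde_rc {l : ℝ} (hl : 1 < l) : RankOneConvex (Wtilde l) := by
  intro F a b
  refine ⟨convex_univ, ?_⟩
  intro t₁ _ t₂ _ p q hp hq hpq
  have hq' : q = 1 - p := by linarith
  subst hq'
  simp only [smul_eq_mul]
  have hx : xF (F + (p * t₁ + (1 - p) * t₂) • vecMulVec a b)
      ≤ p * xF (F + t₁ • vecMulVec a b) + (1 - p) * xF (F + t₂ • vecMulVec a b) := by
    rw [xF_nrm, xF_nrm, xF_nrm]
    have he : (F + (p * t₁ + (1 - p) * t₂) • vecMulVec a b).mulVec vvec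
        = fun i => p * ((F + t₁ • vecMulVec a b).mulVec vvec i)
          + (1 - p) * ((F + t₂ • vecMulVec a b).mulVec vvec i) := by
      funext i
      rw [line_mulVec, line_mulVec, line_mulVec]
      ring
    rw [he]
    exact nrm_combo _ _ hp (by linarith)
  have hy : yF (F + (p * t₁ + (1 - p) * t₂) • vecMulVec a b)
      ≤ p * yF (F + t₁ • vecMulVec a b) + (1 - p) * yF (F + t₂ • vecMulVec a b) := by
    rw [yF_nrm, yF_nrm, yF_nrm]
    have he : (F + (p * t₁ + (1 - p) * t₂) • vecMulVec a b).mulVec wvec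
        = fun i => p * ((F + t₁ • vecMulVec a b).mulVec wvec i)
          + (1 - p) * ((F + t₂ • vecMulVec a b).mulVec wvec i) := by
      funext i
      rw [line_mulVec, line_mulVec, line_mulVec]
      ring
    rw [he]
    exact nrm_combo _ _ hp (by linarith)
  have hd : (F + (p * t₁ + (1 - p) * t₂) • vecMulVec a b).det
      = p * (F + t₁ • vecMulVec a b).det + (1 - p) * (F + t₂ • vecMulVec a b).det := by
    rw [Matrix.det_fin_two, Matrix.det_fin_two, Matrix.det_fin_two]
    simp only [Matrix.add_apply, Matrix.smul_apply, Matrix.vecMulVec_apply, smul_eq_mul]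
    ring
  exact hfun_combo hl (xF_nonneg _) (yF_nonneg _) (det_abs_le _) (xF_nonneg _) (yF_nonneg _)
    (det_abs_le _) hp (by linarith) (by ring) hx hy hd

theorem psi_le {l : ℝ} (hl : 1 < l) {ψ : Matrix (Fin 2) (Fin 2) ℝ → ℝ}
    (hRC : RankOneConvex ψ) (hle : ∀ G, ψ G ≤ distSqK l G)
    (F : Matrix (Fin 2) (Fin 2) ℝ) : ψ F ≤ Wtilde l F := by
  show ψ F ≤ hfun l (xF F) (yF F) F.det
  apply le_hfun
  intro ξ η hξ hη
  have key : ∀ G : Matrix (Fin 2) (Fin 2) ℝ, nrm (G.mulVec vvec) = ξ →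
      nrm (G.mulVec wvec) = η → G.det = F.det → ψ G ≤ gfun l ξ η F.det := by
    intro G h1 h2 h3
    have h := hle G
    rw [distSq_eq hl G, xF_nrm, yF_nrm, h1, h2, h3] at h
    exact h
  obtain ⟨F₁, F₂, θ, hθ0, hθ1, hψF, ⟨ha1, hb1, hc1⟩, ⟨ha2, hb2, hc2⟩⟩ :=
    raise hRC F vvec wvec vvec_unit wvec_unit vw_orth (η := η) (by rw [← yF_nrm]; exact hη)
  have step : ∀ G : Matrix (Fin 2) (Fin 2) ℝ, nrm (G.mulVec vvec) = nrm (F.mulVec vvec) →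
      nrm (G.mulVec wvec) = η → G.det = F.det → ψ G ≤ gfun l ξ η F.det := by
    intro G hGx hGy hGd
    obtain ⟨G₁, G₂, θ', h0', h1', hψG, ⟨ga1, gb1, gc1⟩, ⟨ga2, gb2, gc2⟩⟩ :=
      raise hRC G wvec vvec wvec_unit vvec_unit wv_orth (η := ξ)
        (by rw [hGx, ← xF_nrm]; exact hξ)
    have k1 := key G₁ gb1 (by rw [ga1, hGy]) (by rw [gc1, hGd])
    have k2 := key G₂ gb2 (by rw [ga2, hGy]) (by rw [gc2, hGd])
    exact le_trans hψG (comb_le h0' h1' k1 k2)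
  have s1 := step F₁ ha1 hb1 hc1
  have s2 := step F₂ ha2 hb2 hc2
  exact le_trans hψF (comb_le hθ0 hθ1 s1 s2)


end WAux

open WAux in
/-- `W̃` is the rank-one convex envelope of `W = dist²(·, K)`: it lies below `W`,
is rank-one convex, dominates every rank-one convex function below `W`, and
equals the pointwise supremum of all such functions. -/
theorem Wtilde_is_rankOneConvex_envelope (l : ℝ) (hl : 1 < l) :
    (∀ F : Matrix (Fin 2) (Fin 2) ℝ, Wtilde l F ≤ distSqK l F) ∧
    RankOneConvex (Wtilde l) ∧
    (∀ ψ : Matrix (Fin 2) (Fin 2) ℝ → ℝ, RankOneConvex ψ →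
      (∀ G, ψ G ≤ distSqK l G) → ∀ F, ψ F ≤ Wtilde l F) ∧
    (∀ F : Matrix (Fin 2) (Fin 2) ℝ,
      Wtilde l F = sSup {r : ℝ | ∃ ψ : Matrix (Fin 2) (Fin 2) ℝ → ℝ,
        RankOneConvex ψ ∧ (∀ G, ψ G ≤ distSqK l G) ∧ r = ψ F}) := by
  have part1 : ∀ F : Matrix (Fin 2) (Fin 2) ℝ, Wtilde l F ≤ distSqK l F := by
    intro F
    rw [distSq_eq hl F]
    exact hfun_le hl le_rfl le_rfl
  have part2 : RankOneConvex (Wtilde l) := wtilde_rc hl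
  refine ⟨part1, part2, fun ψ hRC hle F => psi_le hl hRC hle F, ?_⟩
  intro F
  apply le_antisymm
  · apply le_csSup
    · exact ⟨Wtilde l F, by rintro r ⟨ψ, hRC, hle, rfl⟩; exact psi_le hl hRC hle F⟩
    · exact ⟨Wtilde l, part2, part1, rfl⟩
  · apply csSup_le
    · exact ⟨Wtilde l F, ⟨Wtilde l, part2, part1, rfl⟩⟩
    · rintro r ⟨ψ, hRC, hle, rfl⟩
      exact psi_le hl hRC hle F
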